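/- arXiv:0910.2743 — 2 statements merged into one kernel-verified Lean document; each statement's English description precedes it below -/
import Mathlib

section
/- Let P be an M×M real matrix such that every eigenvalue of P, viewed as a matrix over ℂ, has modulus strictly less than 1, let B be an M×n real matrix, and let u ∈ ℝⁿ. Let (P_t)_{t≥0} and (B_t)_{t≥0} be sequences of M×M and M×n real matrices, respectively, converging entrywise to P and B. Let α(t) = a/(t+1)^δ with a > 0 and 0 < δ ≤ 1. Then for any initial x(0) ∈ ℝ^M, the sequence defined by x(t+1) = (1 − α(t))·x(t) + α(t)·(P_t·x(t) + B_t·u) converges as t → ∞ to (I − P)^{-1}·B·u. -/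
/-!
By Gelfand's formula some power `P ^ k` is a contraction. The seminorm
`N v = ∑_{j<k} ‖P ^ j v‖` then satisfies `N (P v) = N v - ‖v‖ + ‖P ^ k v‖`, so it is contracted
by `P`, and uniformly so by every `P_t` close enough to `P`. In `N`, the error `e t = x t - x⋆`
obeys `N (e (t+1)) ≤ (1 - c α t) N (e t) + α t N (w t)` with `w t → 0`, and since `∑ α t = ∞`
this forces `N (e t) → 0`.
-/

open Filter

/-- `ρ(P) < 1`: every eigenvalue of `P`, viewed as a matrix over `ℂ`
(equivalently, every complex root of its characteristic polynomial),
has modulus strictly less than `1`. -/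
def SpecRadiusLtOne {M : ℕ} (P : Matrix (Fin M) (Fin M) ℝ) : Prop :=
  ∀ z : ℂ, (P.map (algebraMap ℝ ℂ)).charpoly.IsRoot z → ‖z‖ < 1

open Topology Finset

theorem tendsto_zero_of_le_one_sub_mul {z β : ℕ → ℝ} (hz : ∀ t, 0 ≤ z t)
    (hβ : Tendsto (fun n ↦ ∑ t ∈ range n, β t) atTop atTop)
    (hrec : ∀ᶠ t in atTop, z (t + 1) ≤ (1 - β t) * z t) :
    Tendsto z atTop (𝓝 0) := by
  set S := fun n ↦ ∑ t ∈ range n, β t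
  obtain ⟨T, hT⟩ := eventually_atTop.mp hrec
  -- `z t * exp (S t)` is nonincreasing from `T` on, since `1 - β ≤ exp (-β)`.
  have hmono : ∀ t, T ≤ t → z t * Real.exp (S t) ≤ z T * Real.exp (S T) := by
    intro t ht
    induction t, ht using Nat.le_induction with
    | base => rfl
    | succ t ht ih =>
      refine le_trans ?_ ih
      have hstep : z (t + 1) ≤ Real.exp (-β t) * z t :=
        (hT t ht).trans (mul_le_mul_of_nonneg_right (by linarith [Real.add_one_le_exp (-β t)])
          (hz t))
      calc z (t + 1) * Real.exp (S (t + 1))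
          ≤ Real.exp (-β t) * z t * Real.exp (S (t + 1)) := by gcongr
        _ = z t * Real.exp (S t) := by
          simp only [S, sum_range_succ, Real.exp_add, Real.exp_neg]
          field_simp
  have hbound : ∀ᶠ t in atTop, z t ≤ z T * Real.exp (S T) * Real.exp (-S t) :=
    eventually_atTop.mpr ⟨T, fun t ht ↦ by
      rw [Real.exp_neg, ← div_eq_mul_inv, le_div_iff₀ (Real.exp_pos _)]
      exact hmono t ht⟩
  have hlim : Tendsto (fun t ↦ z T * Real.exp (S T) * Real.exp (-S t)) atTop (𝓝 0) := by
    simpa using (Real.tendsto_exp_atBot.comp (tendsto_neg_atTop_atBot.comp hβ)).const_mul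
      (z T * Real.exp (S T))
  exact squeeze_zero' (Eventually.of_forall hz) hbound hlim

theorem tendsto_zero_of_le_one_sub_mul_add_mul {y β g : ℕ → ℝ} (hy : ∀ t, 0 ≤ y t)
    (hβ0 : ∀ᶠ t in atTop, 0 ≤ β t) (hβ1 : ∀ᶠ t in atTop, β t ≤ 1)
    (hβ : Tendsto (fun n ↦ ∑ t ∈ range n, β t) atTop atTop) (hg : Tendsto g atTop (𝓝 0))
    (hrec : ∀ᶠ t in atTop, y (t + 1) ≤ (1 - β t) * y t + β t * g t) :
    Tendsto y atTop (𝓝 0) := by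
  refine tendsto_order.mpr ⟨fun a ha ↦ Eventually.of_forall fun t ↦ ha.trans_le (hy t),
    fun ε hε ↦ ?_⟩
  -- Once `g ≤ ε / 2`, the excess of `y` over `ε / 2` obeys the homogeneous recursion.
  set z := fun t ↦ max (y t - ε / 2) 0
  have hz : Tendsto z atTop (𝓝 0) := by
    refine tendsto_zero_of_le_one_sub_mul (fun t ↦ le_max_right _ _) hβ ?_
    filter_upwards [hβ0, hβ1, hrec, hg.eventually_le_const (half_pos hε)]
      with t hβ0 hβ1 hrec hg
    refine max_le ?_ (mul_nonneg (by linarith) (le_max_right _ _))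
    calc y (t + 1) - ε / 2 ≤ (1 - β t) * (y t - ε / 2) := by nlinarith
      _ ≤ (1 - β t) * z t := mul_le_mul_of_nonneg_left (le_max_left _ _) (by linarith)
  filter_upwards [hz.eventually_lt_const (half_pos hε)] with t ht
  linarith [le_max_left (y t - ε / 2) 0]

theorem tendsto_sum_range_div_rpow_atTop {a δ : ℝ} (ha : 0 < a) (hδ : δ ≤ 1) :
    Tendsto (fun n ↦ ∑ t ∈ range n, a / ((t : ℝ) + 1) ^ δ) atTop atTop := by
  rw [← not_summable_iff_tendsto_nat_atTop_of_nonneg fun t ↦ by positivity]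
  intro hsum
  have : Summable fun t : ℕ ↦ 1 / |(t : ℝ) + 1| ^ δ := by
    refine (summable_mul_left_iff ha.ne').mp (hsum.congr fun t ↦ ?_)
    rw [abs_of_pos (by positivity)]
    ring
  exact absurd ((Real.summable_one_div_nat_add_rpow 1 δ).mp this) (not_lt.mpr hδ)

theorem tendsto_div_rpow_atTop_nhds_zero {a δ : ℝ} (hδ : 0 < δ) :
    Tendsto (fun t : ℕ ↦ a / ((t : ℝ) + 1) ^ δ) atTop (𝓝 0) :=
  tendsto_const_nhds.div_atTop <| (tendsto_rpow_atTop hδ).comp <|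
    tendsto_atTop_add_const_right _ _ tendsto_natCast_atTop_atTop

theorem Seminorm.apply_relaxed_le {E : Type*} [AddCommGroup E] [Module ℝ E] (p : Seminorm ℝ E)
    {a c : ℝ} {u v w : E} (ha0 : 0 ≤ a) (ha1 : a ≤ 1) (hu : p u ≤ (1 - c) * p v) :
    p ((1 - a) • v + a • u + a • w) ≤ (1 - c * a) * p v + a * p w := by
  calc p ((1 - a) • v + a • u + a • w) ≤ p ((1 - a) • v) + p (a • u) + p (a • w) :=
        (map_add_le_add p _ _).trans (add_le_add_left (map_add_le_add p _ _) _)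
    _ = (1 - a) * p v + a * p u + a * p w := by
        simp only [map_smul_eq_mul, Real.norm_eq_abs, abs_of_nonneg ha0,
          abs_of_nonneg (sub_nonneg.mpr ha1)]
    _ ≤ (1 - c * a) * p v + a * p w := by nlinarith

theorem exists_norm_pow_lt_one_of_forall_mem_spectrum {A : Type*} [NormedRing A] [NormedAlgebra ℂ A]
    [CompleteSpace A] {a : A} (ha : ∀ z ∈ spectrum ℂ a, ‖z‖ < 1) :
    ∃ k, 0 < k ∧ ‖a ^ k‖ < 1 := by
  have hρ : spectralRadius ℂ a < 1 := by
    rcases (spectrum ℂ a).eq_empty_or_nonempty with h | h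
    · simp [spectralRadius, h]
    · exact_mod_cast spectrum.spectralRadius_lt_of_forall_lt_of_nonempty h
        (r := 1) fun z hz ↦ by exact_mod_cast ha z hz
  obtain ⟨k, hk, hk0⟩ := ((spectrum.pow_norm_pow_one_div_tendsto_nhds_spectralRadius a
    |>.eventually_lt_const hρ).and (eventually_gt_atTop 0)).exists
  refine ⟨k, hk0, ?_⟩
  rwa [ENNReal.ofReal_lt_one, Real.rpow_lt_one_iff' (norm_nonneg _) (by positivity)] at hk

namespace ContinuousLinearMap

variable {E : Type*} [NormedAddCommGroup E] [NormedSpace ℝ E] (T : E →L[ℝ] E) (k : ℕ)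

noncomputable def orbitSeminorm : Seminorm ℝ E :=
  ∑ j ∈ range k, (normSeminorm ℝ E).comp (T ^ j).toLinearMap

variable {T k}

theorem orbitSeminorm_apply (v : E) : T.orbitSeminorm k v = ∑ j ∈ range k, ‖(T ^ j) v‖ := by
  rw [orbitSeminorm, ← FunLike.coeAddMonoidHom_apply, map_sum]
  simp only [FunLike.coeAddMonoidHom_apply, Finset.sum_apply, Seminorm.comp_apply,
    coe_normSeminorm, coe_coe]

theorem norm_le_orbitSeminorm (hk : 0 < k) (v : E) : ‖v‖ ≤ T.orbitSeminorm k v := by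
  rw [orbitSeminorm_apply]
  simpa using single_le_sum (f := fun j ↦ ‖(T ^ j) v‖) (fun _ _ ↦ norm_nonneg _)
    (mem_range.mpr hk)

theorem orbitSeminorm_le (v : E) :
    T.orbitSeminorm k v ≤ (∑ j ∈ range k, ‖T ^ j‖) * ‖v‖ := by
  rw [orbitSeminorm_apply, sum_mul]
  exact sum_le_sum fun j _ ↦ (T ^ j).le_opNorm v

theorem orbitSeminorm_apply_self (v : E) :
    T.orbitSeminorm k (T v) = T.orbitSeminorm k v - ‖v‖ + ‖(T ^ k) v‖ := by
  have h := sum_range_succ' (fun j ↦ ‖(T ^ j) v‖) k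
  rw [sum_range_succ] at h
  simp only [pow_succ, mul_apply_eq_comp, pow_zero, one_apply_eq_self] at h
  rw [orbitSeminorm_apply, orbitSeminorm_apply]
  linarith

theorem orbitSeminorm_apply_le (S : E →L[ℝ] E) (v : E) :
    T.orbitSeminorm k (S v) ≤
      T.orbitSeminorm k v - (1 - ‖T ^ k‖ - (∑ j ∈ range k, ‖T ^ j‖) * ‖S - T‖) * ‖v‖ := by
  have hST : T.orbitSeminorm k ((S - T) v) ≤ (∑ j ∈ range k, ‖T ^ j‖) * ‖S - T‖ * ‖v‖ := by
    rw [mul_assoc]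
    exact (orbitSeminorm_le _).trans (by gcongr; exact (S - T).le_opNorm v)
  calc T.orbitSeminorm k (S v) ≤ T.orbitSeminorm k (T v) + T.orbitSeminorm k ((S - T) v) := by
        simpa using map_add_le_add (T.orbitSeminorm k) (T v) ((S - T) v)
    _ ≤ _ := by
        rw [orbitSeminorm_apply_self]
        nlinarith [(T ^ k).le_opNorm v]

theorem exists_eventually_orbitSeminorm_apply_le {S : ℕ → E →L[ℝ] E}
    (hTk : ‖T ^ k‖ < 1) (hS : Tendsto S atTop (𝓝 T)) :
    ∃ c > 0, ∀ᶠ t in atTop, ∀ v, T.orbitSeminorm k (S t v) ≤ (1 - c) * T.orbitSeminorm k v := by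
  set C := ∑ j ∈ range k, ‖T ^ j‖
  set q := ‖T ^ k‖
  have hC : 0 ≤ C := sum_nonneg fun _ _ ↦ norm_nonneg _
  refine ⟨(1 - q) / (2 * (C + 1)), by apply div_pos <;> linarith, ?_⟩
  have hnear : ∀ᶠ t in atTop, C * ‖S t - T‖ ≤ (1 - q) / 2 := by
    have := (tendsto_iff_norm_sub_tendsto_zero.mp hS).const_mul C
    rw [mul_zero] at this
    exact this.eventually_le_const (by linarith)
  filter_upwards [hnear] with t hnear v
  have hNv : T.orbitSeminorm k v ≤ (C + 1) * ‖v‖ := by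
    nlinarith [orbitSeminorm_le (T := T) (k := k) v, norm_nonneg v]
  calc T.orbitSeminorm k (S t v) ≤ T.orbitSeminorm k v - (1 - q) / 2 * ‖v‖ := by
        nlinarith [orbitSeminorm_apply_le (T := T) (k := k) (S t) v, norm_nonneg v]
    _ ≤ T.orbitSeminorm k v - (1 - q) / (2 * (C + 1)) * T.orbitSeminorm k v := by
        have : (1 - q) / (2 * (C + 1)) * T.orbitSeminorm k v ≤ (1 - q) / 2 * ‖v‖ := by
          calc (1 - q) / (2 * (C + 1)) * T.orbitSeminorm k v
              ≤ (1 - q) / (2 * (C + 1)) * ((C + 1) * ‖v‖) := by gcongr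
            _ = (1 - q) / 2 * ‖v‖ := by field_simp
        linarith
    _ = (1 - (1 - q) / (2 * (C + 1))) * T.orbitSeminorm k v := by ring

end ContinuousLinearMap

theorem tendsto_of_relaxed_affine_iteration {E : Type*} [NormedAddCommGroup E] [NormedSpace ℝ E]
    {T : E →L[ℝ] E} {S : ℕ → E →L[ℝ] E} {b x₀ : E} {bt x : ℕ → E} {α : ℕ → ℝ} {k : ℕ}
    (hk : 0 < k) (hTk : ‖T ^ k‖ < 1) (hS : Tendsto S atTop (𝓝 T))
    (hb : Tendsto bt atTop (𝓝 b)) (hfix : T x₀ + b = x₀)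
    (hα0 : ∀ t, 0 ≤ α t) (hα : Tendsto α atTop (𝓝 0))
    (hαsum : Tendsto (fun n ↦ ∑ t ∈ range n, α t) atTop atTop)
    (hrec : ∀ t, x (t + 1) = (1 - α t) • x t + α t • (S t (x t) + bt t)) :
    Tendsto x atTop (𝓝 x₀) := by
  set N := T.orbitSeminorm k
  obtain ⟨c, hc, hcontr⟩ := ContinuousLinearMap.exists_eventually_orbitSeminorm_apply_le hTk hS
  set e := fun t ↦ x t - x₀
  set w := fun t ↦ S t x₀ + bt t - x₀
  have he : ∀ t, e (t + 1) = (1 - α t) • e t + α t • S t (e t) + α t • w t := by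
    intro t
    simp only [e, w, hrec, map_sub]
    module
  have hw : Tendsto w atTop (𝓝 0) := by
    simpa [hfix] using ((((continuous_eval_const x₀).tendsto T).comp hS).add hb).sub_const x₀
  have hNw : Tendsto (fun t ↦ N (w t)) atTop (𝓝 0) :=
    squeeze_zero (fun _ ↦ apply_nonneg _ _) (fun t ↦ ContinuousLinearMap.orbitSeminorm_le (w t))
      (by simpa using (tendsto_zero_iff_norm_tendsto_zero.mp hw).const_mul _)
  have hNe : Tendsto (fun t ↦ N (e t)) atTop (𝓝 0) := by
    refine tendsto_zero_of_le_one_sub_mul_add_mul (β := fun t ↦ c * α t)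
      (fun t ↦ apply_nonneg _ _) (Eventually.of_forall fun t ↦ mul_nonneg hc.le (hα0 t)) ?_
      (by simpa [← mul_sum] using hαsum.const_mul_atTop hc) (by simpa using hNw.div_const c) ?_
    · have := hα.const_mul c
      rw [mul_zero] at this
      exact this.eventually_le_const one_pos
    · filter_upwards [hcontr, hα.eventually_le_const one_pos] with t hcontr hα1
      rw [he]
      refine (N.apply_relaxed_le (hα0 t) hα1 (hcontr _)).trans_eq ?_
      field_simp
  have : Tendsto e atTop (𝓝 0) := by
    refine tendsto_zero_iff_norm_tendsto_zero.mpr (squeeze_zero (fun _ ↦ norm_nonneg _)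
      (fun t ↦ ContinuousLinearMap.norm_le_orbitSeminorm hk (e t)) hNe)
  simpa [e] using this.add_const x₀

namespace Matrix

variable {ι : Type*} [Fintype ι] [DecidableEq ι]

noncomputable def toPiCLM : Matrix ι ι ℝ →ₐ[ℝ] (ι → ℝ) →L[ℝ] (ι → ℝ) :=
  (Module.End.toContinuousLinearMap (ι → ℝ)).toAlgHom.comp toLinAlgEquiv'.toAlgHom

@[simp] theorem toPiCLM_apply (A : Matrix ι ι ℝ) (v : ι → ℝ) : toPiCLM A v = A *ᵥ v := rfl

theorem continuous_toPiCLM : Continuous (toPiCLM : Matrix ι ι ℝ → _) :=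
  LinearMap.continuous_of_finiteDimensional toPiCLM.toLinearMap

theorem mulVec_nonsing_inv_one_sub_add {R : Type*} [CommRing R] {P : Matrix ι ι R}
    (h : IsUnit (1 - P).det) (b : ι → R) : P *ᵥ ((1 - P)⁻¹ *ᵥ b) + b = (1 - P)⁻¹ *ᵥ b := by
  have hinv : (1 - P) *ᵥ ((1 - P)⁻¹ *ᵥ b) = b := by
    rw [mulVec_mulVec, mul_nonsing_inv _ h, one_mulVec]
  rw [sub_mulVec, one_mulVec] at hinv
  exact (sub_eq_iff_eq_add'.mp hinv).symm

section
attribute [local instance] Matrix.linftyOpNormedAddCommGroup Matrix.linftyOpNormedRing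
  Matrix.linftyOpNormedAlgebra

theorem norm_toPiCLM (A : Matrix ι ι ℝ) : ‖toPiCLM A‖ = ‖A‖ :=
  (linfty_opNorm_eq_opNorm A).symm

theorem linfty_opNorm_map_ofReal {m n : Type*} [Fintype m] [Fintype n] (A : Matrix m n ℝ) :
    ‖A.map (algebraMap ℝ ℂ)‖ = ‖A‖ := by
  simp [linfty_opNorm_def]

end

end Matrix

namespace SpecRadiusLtOne

open Matrix

variable {M : ℕ} {P : Matrix (Fin M) (Fin M) ℝ}

theorem norm_lt_one_of_mem_spectrum (hP : SpecRadiusLtOne P) :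
    ∀ z ∈ spectrum ℂ (P.map (algebraMap ℝ ℂ)), ‖z‖ < 1 :=
  fun z hz ↦ hP z (mem_spectrum_iff_isRoot_charpoly.mp hz)

theorem isUnit_det_one_sub (hP : SpecRadiusLtOne P) : IsUnit (1 - P).det := by
  have h1 : (1 : ℝ) ∉ spectrum ℝ P := fun h ↦ by
    have := hP 1 (by
      rw [charpoly_map, ← map_one (algebraMap ℝ ℂ)]
      exact (mem_spectrum_iff_isRoot_charpoly.mp h).map)
    simp at this
  rw [spectrum.notMem_iff, map_one] at h1
  exact (isUnit_iff_isUnit_det _).mp h1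

attribute [local instance] Matrix.linftyOpNormedAddCommGroup Matrix.linftyOpNormedRing
  Matrix.linftyOpNormedAlgebra in
theorem exists_norm_toPiCLM_pow_lt_one (hP : SpecRadiusLtOne P) :
    ∃ k, 0 < k ∧ ‖toPiCLM P ^ k‖ < 1 := by
  obtain ⟨k, hk, hPk⟩ := exists_norm_pow_lt_one_of_forall_mem_spectrum
    (A := Matrix (Fin M) (Fin M) ℂ) hP.norm_lt_one_of_mem_spectrum
  refine ⟨k, hk, ?_⟩
  rwa [← map_pow, norm_toPiCLM, ← linfty_opNorm_map_ofReal, ← RingHom.mapMatrix_apply, map_pow]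

end SpecRadiusLtOne

/-- Deterministic (per sample path) DILAND convergence: if `ρ(P) < 1`,
`P_t → P`, `B_t → B`, and `α(t) = a/(t+1)^δ` with `a > 0`, `0 < δ ≤ 1`, then the
iterates `x(t+1) = (1 - α(t))·x(t) + α(t)·(P_t·x(t) + B_t·u)` converge to
`(I - P)⁻¹·B·u`. -/
theorem diland_deterministic_convergence
    (M n : ℕ) (P : Matrix (Fin M) (Fin M) ℝ) (hP : SpecRadiusLtOne P)
    (B : Matrix (Fin M) (Fin n) ℝ) (u : Fin n → ℝ)
    (Pt : ℕ → Matrix (Fin M) (Fin M) ℝ) (Bt : ℕ → Matrix (Fin M) (Fin n) ℝ)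
    (hPt : Tendsto Pt atTop (nhds P)) (hBt : Tendsto Bt atTop (nhds B))
    (a δ : ℝ) (ha : 0 < a) (hδ0 : 0 < δ) (hδ1 : δ ≤ 1)
    (α : ℕ → ℝ) (hα : ∀ t : ℕ, α t = a / ((t : ℝ) + 1) ^ δ)
    (x : ℕ → Fin M → ℝ)
    (hrec : ∀ t : ℕ, x (t + 1) =
      (1 - α t) • x t + α t • ((Pt t).mulVec (x t) + (Bt t).mulVec u)) :
    Tendsto x atTop (nhds ((1 - P)⁻¹.mulVec (B.mulVec u))) := by
  obtain rfl : α = fun t : ℕ ↦ a / ((t : ℝ) + 1) ^ δ := funext hα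
  obtain ⟨k, hk, hPk⟩ := hP.exists_norm_toPiCLM_pow_lt_one
  refine tendsto_of_relaxed_affine_iteration (S := fun t ↦ Matrix.toPiCLM (Pt t))
    (bt := fun t ↦ (Bt t).mulVec u) hk hPk ((Matrix.continuous_toPiCLM.tendsto P).comp hPt)
    (((continuous_id.matrix_mulVec continuous_const).tendsto B).comp hBt)
    (by simpa using Matrix.mulVec_nonsing_inv_one_sub_add hP.isUnit_det_one_sub (B.mulVec u))
    (fun t ↦ by positivity) (tendsto_div_rpow_atTop_nhds_zero hδ0)
    (tendsto_sum_range_div_rpow_atTop ha hδ1) (by simpa using hrec)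
end

section
/- Let (Ω, 𝓕, μ) be a probability space, let P be an M×M real matrix such that every eigenvalue of P, viewed as a matrix over ℂ, has modulus strictly less than 1, let B be an M×n real matrix, and let u ∈ ℝⁿ. Let (P_t)_{t≥0} and (B_t)_{t≥0} be sequences of measurable random M×M and M×n real matrices on Ω such that, μ-almost surely, P_t → P and B_t → B entrywise as t → ∞. Let α(t) = a/(t+1)^δ with a > 0 and 0 < δ ≤ 1, fix x(0) ∈ ℝ^M, and define the random sequence x(t+1) = (1 − α(t))·x(t) + α(t)·(P_t·x(t) + B_t·u). Then μ-almost surely, sup_{t≥0} ‖x(t)‖ < ∞. -/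
open Filter MeasureTheory

noncomputable def euclNorm {M : ℕ} (x : Fin M → ℝ) : ℝ :=
  Real.sqrt (∑ i, x i ^ 2)

/-!
By Gelfand's formula, `ρ(P) < 1` gives `‖P ^ m‖ < 1` for some `m ≥ 1`, in the `ℓ∞` operator norm
(which is the same for `P` and its complexification). For the adapted norm
`N v = ∑ k < m, ‖P ^ k v‖` a telescoping shift gives `N (P v) ≤ N v - (1 - ‖P ^ m‖) ‖v‖`, so `P`,
and hence `P_t` for large `t`, is a strict contraction for `N`. Once also `α t ≤ 1` and `B_t u` is
bounded by `K`, the recursion gives `N (x (t+1)) ≤ (1 - γ α t) N (x t) + α t K`, which keeps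
`N (x t)` below `max (N (x T)) (K / γ)`.
-/

open Topology

section AdaptedNorm

variable {E : Type*} [SeminormedAddCommGroup E] [NormedSpace ℝ E] {A : E →L[ℝ] E} {m : ℕ}

variable (A m) in
noncomputable def adaptedNorm (v : E) : ℝ := ∑ k ∈ Finset.range m, ‖(A ^ k) v‖

lemma adaptedNorm_add_le (v w : E) :
    adaptedNorm A m (v + w) ≤ adaptedNorm A m v + adaptedNorm A m w := by
  rw [adaptedNorm, adaptedNorm, adaptedNorm, ← Finset.sum_add_distrib]
  gcongr with k
  rw [map_add]
  exact norm_add_le _ _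

lemma adaptedNorm_smul (c : ℝ) (v : E) : adaptedNorm A m (c • v) = |c| * adaptedNorm A m v := by
  simp only [adaptedNorm, map_smul, norm_smul, Real.norm_eq_abs, Finset.mul_sum]

lemma adaptedNorm_le (v : E) : adaptedNorm A m v ≤ (∑ k ∈ Finset.range m, ‖A ^ k‖) * ‖v‖ := by
  rw [adaptedNorm, Finset.sum_mul]
  gcongr with k
  exact (A ^ k).le_opNorm v

lemma norm_le_adaptedNorm (hm : m ≠ 0) (v : E) : ‖v‖ ≤ adaptedNorm A m v := by
  have := Finset.single_le_sum (f := fun k => ‖(A ^ k) v‖) (fun k _ => norm_nonneg _)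
    (Finset.mem_range.2 (Nat.pos_of_ne_zero hm))
  simp only [pow_zero, one_apply_eq_self] at this
  exact this

lemma adaptedNorm_apply_add_norm (v : E) :
    adaptedNorm A m (A v) + ‖v‖ = adaptedNorm A m v + ‖(A ^ m) v‖ := by
  have hshift : ∀ k, (A ^ k) (A v) = (A ^ (k + 1)) v := fun k => by
    rw [pow_succ, mul_apply_eq_comp]
  simp only [adaptedNorm, hshift]
  rw [← Finset.sum_range_succ, Finset.sum_range_succ' (fun k => ‖(A ^ k) v‖), pow_zero,
    one_apply_eq_self]

lemma adaptedNorm_apply_le (v : E) :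
    adaptedNorm A m (A v) ≤ adaptedNorm A m v - (1 - ‖A ^ m‖) * ‖v‖ := by
  have := adaptedNorm_apply_add_norm (A := A) (m := m) v
  have := (A ^ m).le_opNorm v
  linarith

lemma adaptedNorm_apply_le_of_norm_sub_le {B : E →L[ℝ] E} {D : ℝ} (hD : 0 < D)
    (hND : ∀ v, adaptedNorm A m v ≤ D * ‖v‖) (hB : D * ‖B - A‖ ≤ (1 - ‖A ^ m‖) / 2) (v : E) :
    adaptedNorm A m (B v) ≤ (1 - (1 - ‖A ^ m‖) / (2 * D)) * adaptedNorm A m v := by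
  have hBA : adaptedNorm A m ((B - A) v) ≤ (1 - ‖A ^ m‖) / 2 * ‖v‖ :=
    calc adaptedNorm A m ((B - A) v) ≤ D * (‖B - A‖ * ‖v‖) :=
          (hND _).trans (by gcongr; exact (B - A).le_opNorm v)
      _ ≤ (1 - ‖A ^ m‖) / 2 * ‖v‖ := by rw [← mul_assoc]; gcongr
  have hNv : (1 - ‖A ^ m‖) / (2 * D) * adaptedNorm A m v ≤ (1 - ‖A ^ m‖) / 2 * ‖v‖ := by
    have hq : 0 ≤ 1 - ‖A ^ m‖ := by linarith [mul_nonneg hD.le (norm_nonneg (B - A))]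
    rw [div_mul_eq_mul_div, div_le_iff₀ (by positivity)]
    calc (1 - ‖A ^ m‖) * adaptedNorm A m v ≤ (1 - ‖A ^ m‖) * (D * ‖v‖) := by gcongr; exact hND v
      _ = (1 - ‖A ^ m‖) / 2 * ‖v‖ * (2 * D) := by ring
  calc adaptedNorm A m (B v) = adaptedNorm A m (A v + (B - A) v) := by
        rw [sub_apply, add_sub_cancel]
    _ ≤ adaptedNorm A m v - (1 - ‖A ^ m‖) * ‖v‖ + (1 - ‖A ^ m‖) / 2 * ‖v‖ :=
        (adaptedNorm_add_le _ _).trans (add_le_add (adaptedNorm_apply_le v) hBA)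
    _ ≤ (1 - (1 - ‖A ^ m‖) / (2 * D)) * adaptedNorm A m v := by linarith

lemma adaptedNorm_relaxation_le {B : E →L[ℝ] E} {c a : ℝ} (ha0 : 0 ≤ a) (ha1 : a ≤ 1)
    (hB : ∀ v, adaptedNorm A m (B v) ≤ c * adaptedNorm A m v) (v w : E) :
    adaptedNorm A m ((1 - a) • v + a • (B v + w)) ≤
      (1 - a * (1 - c)) * adaptedNorm A m v + a * adaptedNorm A m w :=
  calc adaptedNorm A m ((1 - a) • v + a • (B v + w))
      ≤ (1 - a) * adaptedNorm A m v + a * (c * adaptedNorm A m v + adaptedNorm A m w) := by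
        refine (adaptedNorm_add_le _ _).trans ?_
        rw [adaptedNorm_smul, adaptedNorm_smul, abs_of_nonneg (sub_nonneg.2 ha1),
          abs_of_nonneg ha0]
        gcongr
        exact (adaptedNorm_add_le _ _).trans (add_le_add_left (hB v) _)
    _ = (1 - a * (1 - c)) * adaptedNorm A m v + a * adaptedNorm A m w := by ring

end AdaptedNorm

lemma bddAbove_range_of_eventually_le_one_sub_mul_add {s α : ℕ → ℝ} {γ K : ℝ}
    (hγ0 : 0 < γ) (hγ1 : γ ≤ 1)
    (h : ∀ᶠ t in atTop, 0 ≤ α t ∧ α t ≤ 1 ∧ s (t + 1) ≤ (1 - α t * γ) * s t + α t * K) :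
    BddAbove (Set.range s) := by
  obtain ⟨T, hT⟩ := eventually_atTop.1 h
  have hK : K ≤ γ * max (s T) (K / γ) := (div_le_iff₀' hγ0).1 (le_max_right _ _)
  have hbound : ∀ t ≥ T, s t ≤ max (s T) (K / γ) := by
    intro t ht
    induction t, ht using Nat.le_induction with
    | base => exact le_max_left _ _
    | succ t ht ih =>
      obtain ⟨hα0, hα1, hs⟩ := hT t ht
      have : 0 ≤ 1 - α t * γ := by nlinarith
      calc s (t + 1) ≤ (1 - α t * γ) * s t + α t * K := hs
        _ ≤ (1 - α t * γ) * max (s T) (K / γ) + α t * (γ * max (s T) (K / γ)) := by gcongr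
        _ = max (s T) (K / γ) := by ring
  exact (isBoundedUnder_of_eventually_le (eventually_atTop.2 ⟨T, hbound⟩)).bddAbove_range

theorem exists_norm_le_of_relaxation {E : Type*} [SeminormedAddCommGroup E] [NormedSpace ℝ E]
    {A : E →L[ℝ] E} {m : ℕ} {Q : ℕ → E →L[ℝ] E} {w y : ℕ → E} {α : ℕ → ℝ}
    (hm : m ≠ 0) (hAm : ‖A ^ m‖ < 1) (hQ : Tendsto Q atTop (𝓝 A))
    (hw : IsBoundedUnder (· ≤ ·) atTop fun t => ‖w t‖)
    (hα : ∀ᶠ t in atTop, 0 ≤ α t ∧ α t ≤ 1)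
    (hy : ∀ t, y (t + 1) = (1 - α t) • y t + α t • (Q t (y t) + w t)) :
    ∃ C, ∀ t, ‖y t‖ ≤ C := by
  obtain ⟨D, hD1, hND⟩ : ∃ D, 1 ≤ D ∧ ∀ v, adaptedNorm A m v ≤ D * ‖v‖ :=
    ⟨max 1 (∑ k ∈ Finset.range m, ‖A ^ k‖), le_max_left _ _,
      fun v => (adaptedNorm_le v).trans (by gcongr; exact le_max_right _ _)⟩
  set γ := (1 - ‖A ^ m‖) / (2 * D)
  have hγ0 : 0 < γ := div_pos (by linarith) (by linarith)
  have hγ1 : γ ≤ 1 := (div_le_one (by linarith)).2 (by linarith [norm_nonneg (A ^ m)])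
  obtain ⟨K, hK⟩ := hw
  have hQA : ∀ᶠ t in atTop, D * ‖Q t - A‖ ≤ (1 - ‖A ^ m‖) / 2 := by
    have := (tendsto_iff_norm_sub_tendsto_zero.1 hQ).const_mul D
    rw [mul_zero] at this
    exact this.eventually_le_const (by linarith)
  have hstep : ∀ᶠ t in atTop, 0 ≤ α t ∧ α t ≤ 1 ∧ adaptedNorm A m (y (t + 1)) ≤
      (1 - α t * γ) * adaptedNorm A m (y t) + α t * (D * K) := by
    filter_upwards [hα, hQA, hK] with t ⟨hα0, hα1⟩ hQt hwt
    refine ⟨hα0, hα1, ?_⟩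
    rw [hy t]
    refine (adaptedNorm_relaxation_le hα0 hα1
      (adaptedNorm_apply_le_of_norm_sub_le (by linarith) hND hQt) _ _).trans ?_
    rw [sub_sub_cancel]
    gcongr
    exact (hND _).trans (by gcongr; exact hwt)
  obtain ⟨C, hC⟩ := bddAbove_range_of_eventually_le_one_sub_mul_add
    (s := fun t => adaptedNorm A m (y t)) hγ0 hγ1 hstep
  exact ⟨C, fun t => (norm_le_adaptedNorm hm _).trans (hC ⟨t, rfl⟩)⟩

theorem eventually_norm_pow_lt_one {A : Type*} [NormedRing A] [NormedAlgebra ℂ A]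
    [CompleteSpace A] {a : A} (ha : spectralRadius ℂ a < 1) : ∀ᶠ n in atTop, ‖a ^ n‖ < 1 := by
  have hGelfand := spectrum.pow_nnnorm_pow_one_div_tendsto_nhds_spectralRadius a
  filter_upwards [hGelfand.eventually_lt_const ha, eventually_gt_atTop 0] with n hn hn0
  have : (‖a ^ n‖₊ : ENNReal) < 1 :=
    not_le.1 fun h => hn.not_ge (ENNReal.one_le_rpow h (by positivity))
  exact_mod_cast this

namespace Matrix

variable {n : Type*} [Fintype n] [DecidableEq n]

noncomputable def toCLMAlgEquiv' : Matrix n n ℝ ≃ₐ[ℝ] ((n → ℝ) →L[ℝ] (n → ℝ)) :=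
  toLinAlgEquiv'.trans (Module.End.toContinuousLinearMap _)

lemma continuous_toCLMAlgEquiv' : Continuous (toCLMAlgEquiv' : Matrix n n ℝ → _) :=
  (toCLMAlgEquiv' : Matrix n n ℝ ≃ₐ[ℝ] _).toLinearMap.continuous_of_finiteDimensional

end Matrix

section LinftyOpNorm

attribute [local instance] Matrix.linftyOpNormedAddCommGroup Matrix.linftyOpNormedRing
  Matrix.linftyOpNormedAlgebra

lemma Matrix.linfty_opNorm_map_algebraMap {m n : Type*} [Fintype m] [Fintype n]
    (Q : Matrix m n ℝ) : ‖Q.map (algebraMap ℝ ℂ)‖ = ‖Q‖ := by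
  simp [linfty_opNorm_def]

lemma Matrix.norm_toCLMAlgEquiv' {n : Type*} [Fintype n] [DecidableEq n] (Q : Matrix n n ℝ) :
    ‖toCLMAlgEquiv' Q‖ = ‖Q‖ :=
  (linfty_opNorm_eq_opNorm Q).symm

variable {M : ℕ} {P : Matrix (Fin M) (Fin M) ℝ}

lemma SpecRadiusLtOne.spectralRadius_lt_one (hP : SpecRadiusLtOne P) :
    spectralRadius ℂ (P.map (algebraMap ℝ ℂ)) < 1 := by
  rcases (spectrum ℂ (P.map (algebraMap ℝ ℂ))).eq_empty_or_nonempty with h | h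
  · rw [spectralRadius, h]
    simp
  · refine spectrum.spectralRadius_lt_of_forall_lt_of_nonempty h fun z hz => ?_
    have := hP z (Matrix.mem_spectrum_iff_isRoot_charpoly.1 hz)
    exact_mod_cast this

lemma SpecRadiusLtOne.exists_pow_norm_lt_one (hP : SpecRadiusLtOne P) :
    ∃ m ≠ 0, ‖Matrix.toCLMAlgEquiv' P ^ m‖ < 1 := by
  obtain ⟨m, hm, hm0⟩ :=
    ((eventually_norm_pow_lt_one hP.spectralRadius_lt_one).and (eventually_ne_atTop 0)).exists
  refine ⟨m, hm0, ?_⟩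
  rwa [← map_pow, Matrix.norm_toCLMAlgEquiv', ← Matrix.linfty_opNorm_map_algebraMap,
    Matrix.map_pow]

end LinftyOpNorm

lemma exists_euclNorm_le_mul_norm (M : ℕ) :
    ∃ c, 0 ≤ c ∧ ∀ x : Fin M → ℝ, euclNorm x ≤ c * ‖x‖ := by
  let e : (Fin M → ℝ) →L[ℝ] EuclideanSpace ℝ (Fin M) :=
    (PiLp.continuousLinearEquiv 2 ℝ fun _ : Fin M => ℝ).symm
  refine ⟨‖e‖, norm_nonneg _, fun x => ?_⟩
  calc euclNorm x = ‖e x‖ := by simp [euclNorm, e, EuclideanSpace.norm_eq]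
    _ ≤ ‖e‖ * ‖x‖ := e.le_opNorm x

lemma tendsto_div_natCast_add_one_rpow (a : ℝ) {δ : ℝ} (hδ : 0 < δ) :
    Tendsto (fun t : ℕ => a / ((t : ℝ) + 1) ^ δ) atTop (𝓝 0) :=
  tendsto_const_nhds.div_atTop <| (tendsto_rpow_atTop hδ).comp <|
    tendsto_atTop_add_const_right _ 1 tendsto_natCast_atTop_atTop

theorem diland_as_bounded_general
    {Ω : Type*} [MeasurableSpace Ω] (μ : Measure Ω)
    (M n : ℕ) (P : Matrix (Fin M) (Fin M) ℝ) (hP : SpecRadiusLtOne P)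
    (B : Matrix (Fin M) (Fin n) ℝ) (u : Fin n → ℝ)
    (Pt : ℕ → Ω → Matrix (Fin M) (Fin M) ℝ)
    (Bt : ℕ → Ω → Matrix (Fin M) (Fin n) ℝ)
    (hconv : ∀ᵐ ω ∂μ,
      Tendsto (fun t => Pt t ω) atTop (nhds P) ∧
      Tendsto (fun t => Bt t ω) atTop (nhds B))
    (a δ : ℝ) (ha : 0 < a) (hδ0 : 0 < δ)
    (α : ℕ → ℝ) (hα : ∀ t : ℕ, α t = a / ((t : ℝ) + 1) ^ δ)
    (x : ℕ → Ω → Fin M → ℝ)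
    (hrec : ∀ (t : ℕ) (ω : Ω), x (t + 1) ω =
      (1 - α t) • x t ω + α t • ((Pt t ω).mulVec (x t ω) + (Bt t ω).mulVec u)) :
    ∀ᵐ ω ∂μ, ∃ C : ℝ, ∀ t : ℕ, euclNorm (x t ω) ≤ C := by
  obtain ⟨m, hm, hPm⟩ := hP.exists_pow_norm_lt_one
  have hα01 : ∀ᶠ t in atTop, 0 ≤ α t ∧ α t ≤ 1 := by
    simp only [hα]
    filter_upwards [(tendsto_div_natCast_add_one_rpow a hδ0).eventually_le_const one_pos]
      with t ht using ⟨by positivity, ht⟩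
  obtain ⟨c, hc0, hc⟩ := exists_euclNorm_le_mul_norm M
  filter_upwards [hconv] with ω ⟨hPω, hBω⟩
  have hQ := (Matrix.continuous_toCLMAlgEquiv'.tendsto P).comp hPω
  have hw : IsBoundedUnder (· ≤ ·) atTop fun t => ‖(Bt t ω).mulVec u‖ :=
    (((continuous_id.matrix_mulVec continuous_const).tendsto B).comp hBω).norm.isBoundedUnder_le
  obtain ⟨C, hC⟩ := exists_norm_le_of_relaxation (y := fun t => x t ω) hm hPm hQ hw hα01
    (fun t => hrec t ω)
  exact ⟨c * C, fun t => (hc _).trans (by gcongr; exact hC t)⟩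

/-- Boundedness lemma for DILAND with noisy distance measurements: on a
probability space `(Ω, 𝓕, μ)`, if `ρ(P) < 1` and the random matrices `P_t, B_t`
converge to `P, B` almost surely, then with `α(t) = a/(t+1)^δ` (`a > 0`,
`0 < δ ≤ 1`) the random iterates
`x(t+1) = (1 - α(t))·x(t) + α(t)·(P_t·x(t) + B_t·u)` are almost surely
bounded in the Euclidean norm. -/
theorem diland_as_bounded
    {Ω : Type*} [MeasurableSpace Ω] (μ : Measure Ω) [IsProbabilityMeasure μ]
    (M n : ℕ) (P : Matrix (Fin M) (Fin M) ℝ) (hP : SpecRadiusLtOne P)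
    (B : Matrix (Fin M) (Fin n) ℝ) (u : Fin n → ℝ)
    (Pt : ℕ → Ω → Matrix (Fin M) (Fin M) ℝ)
    (Bt : ℕ → Ω → Matrix (Fin M) (Fin n) ℝ)
    (hPtmeas : ∀ (t : ℕ) (i j : Fin M), Measurable fun ω => Pt t ω i j)
    (hBtmeas : ∀ (t : ℕ) (i : Fin M) (k : Fin n), Measurable fun ω => Bt t ω i k)
    (hconv : ∀ᵐ ω ∂μ,
      Tendsto (fun t => Pt t ω) atTop (nhds P) ∧
      Tendsto (fun t => Bt t ω) atTop (nhds B))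
    (a δ : ℝ) (ha : 0 < a) (hδ0 : 0 < δ) (hδ1 : δ ≤ 1)
    (α : ℕ → ℝ) (hα : ∀ t : ℕ, α t = a / ((t : ℝ) + 1) ^ δ)
    (x0 : Fin M → ℝ) (x : ℕ → Ω → Fin M → ℝ)
    (hx0 : ∀ ω, x 0 ω = x0)
    (hrec : ∀ (t : ℕ) (ω : Ω), x (t + 1) ω =
      (1 - α t) • x t ω + α t • ((Pt t ω).mulVec (x t ω) + (Bt t ω).mulVec u)) :
    ∀ᵐ ω ∂μ, ∃ C : ℝ, ∀ t : ℕ, euclNorm (x t ω) ≤ C :=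
  diland_as_bounded_general μ M n P hP B u Pt Bt hconv a δ ha hδ0 α hα x hrec
end
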